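/- Let G be a unimodular compactly generated locally compact group with compact symmetric generating neighbourhood K and Haar measure λ, and suppose G satisfies the Følner condition: for every ε > 0 and every m, there is a compact L ⊆ G with λ(L) > 0 and λ(LKᵐ ∖ L)/λ(L) < ε. Then any rough Cayley graph X of G is amenable as a metric space: for every c > 0 and ε > 0 there is a finite set A of vertices with |∂_c A|/|A| < ε, where ∂_c A = {x ∈ X : d(x,A) ≤ c and d(x, X∖A) ≤ c}. -/

import Mathlib

open Pointwise

/-- Quasi-isometric-embedding bounds with respect to arbitrary distance functions. -/
def QIEmb {α β : Type*} (d₁ : α → α → ℝ) (d₂ : β → β → ℝ) (C r : ℝ) (f : α → β) : Prop :=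
  ∀ x y : α, C⁻¹ * d₁ x y - r ≤ d₂ (f x) (f y) ∧ d₂ (f x) (f y) ≤ C * d₁ x y + r

/-- The graph metric of a graph, as a real-valued distance. -/
noncomputable def grDist {V : Type*} (Gr : SimpleGraph V) (u v : V) : ℝ := (Gr.dist u v : ℝ)

/-- `X` (the vertex set of `Gr`) is a rough Cayley graph of `G` via the quasi-action
`act` with constants `C₁, r₁`: `Gr` is a uniformly locally finite connected graph
and `act` is a proper cobounded `(C₁,r₁)`-quasi-action of `G` on it. -/
def IsRoughCayleyGraph {G V : Type*} [Group G] [TopologicalSpace G]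
    (Gr : SimpleGraph V) (act : G → V → V) (C₁ r₁ : ℝ) : Prop :=
  Gr.Connected ∧
  (∃ M : ℕ, ∀ v : V, (Gr.neighborSet v).Finite ∧ (Gr.neighborSet v).ncard ≤ M) ∧
  (∀ s : G, QIEmb (grDist Gr) (grDist Gr) C₁ r₁ (act s) ∧
    ∀ y : V, ∃ x : V, grDist Gr (act s x) y ≤ r₁) ∧
  (∀ x : V, grDist Gr (act 1 x) x ≤ r₁) ∧
  (∀ (s t : G) (x : V), grDist Gr (act s (act t x)) (act (s * t) x) ≤ r₁) ∧
  (∀ L : Set G, IsCompact L → ∀ x : V, ∃ R : ℝ, ∀ s ∈ L, grDist Gr (act s x) x ≤ R) ∧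
  (∀ R : ℝ, ∀ x : V, IsCompact (closure {s : G | grDist Gr (act s x) x ≤ R})) ∧
  (∀ x y : V, ∃ s : G, grDist Gr (act s x) y ≤ r₁)

/-- The `c`-boundary of a vertex set `A` in a graph. -/
noncomputable def grBoundary {V : Type*} (Gr : SimpleGraph V) (c : ℝ) (A : Set V) : Set V :=
  {x : V | (∃ a ∈ A, grDist Gr x a ≤ c) ∧ (∃ b ∈ Aᶜ, grDist Gr x b ≤ c)}

/-! The orbit map `φ s = act s x₀` is a coarse equivalence between `G` and the graph: translating
by a compact set moves points a bounded distance, points with close images differ by an element of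
a fixed power `Kⁿ⁰`, and the image is cobounded, say `φ (ψ x)` is near `x`. Given a Følner set `L`
for a large power `Kᵐ`, let `A` be a large neighbourhood of `φ '' L`. The fibres of `φ` lie in
translates of `Kⁿ⁰`, so `μ L ≤ μ(Kⁿ⁰) |A|`. For `x` in `∂_c A` the translate `ψ x • K` lies in the
annulus `L Kᵐ \ L`, and these translates overlap at most `N` times, hence
`|∂_c A| μ(K°) ≤ N μ(L Kᵐ \ L) ≤ N ε μ L ≤ N ε μ(Kⁿ⁰) |A|`. -/

open MeasureTheory Topology

section GraphMetric

variable {V : Type*} {Gr : SimpleGraph V}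

lemma grDist_self (v : V) : grDist Gr v v = 0 := by simp [grDist]

lemma grDist_comm (u v : V) : grDist Gr u v = grDist Gr v u := by
  simp [grDist, SimpleGraph.dist_comm]

lemma SimpleGraph.Connected.grDist_triangle (hconn : Gr.Connected) (u v w : V) :
    grDist Gr u w ≤ grDist Gr u v + grDist Gr v w := by
  unfold grDist
  exact_mod_cast hconn.dist_triangle

lemma SimpleGraph.Connected.setOf_dist_le_finite_ncard_le (hconn : Gr.Connected) {M : ℕ}
    (hM : ∀ v : V, (Gr.neighborSet v).Finite ∧ (Gr.neighborSet v).ncard ≤ M) (x : V) :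
    ∀ n : ℕ, {y | Gr.dist y x ≤ n}.Finite ∧ {y | Gr.dist y x ≤ n}.ncard ≤ (M + 1) ^ n
  | 0 => by
    have : {y | Gr.dist y x ≤ (0 : ℕ)} = {x} := by
      ext y; simp [hconn.dist_eq_zero_iff]
    simp only [this, Set.finite_singleton, Set.ncard_singleton, pow_zero, le_refl, and_self]
  | n + 1 => by
    obtain ⟨hfin, hcard⟩ := hconn.setOf_dist_le_finite_ncard_le hM x n
    have hsub : {y | Gr.dist y x ≤ n + 1} ⊆ ⋃ z ∈ hfin.toFinset, insert z (Gr.neighborSet z) := by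
      intro y hy
      obtain ⟨p, hp⟩ := hconn.exists_walk_length_eq_dist y x
      cases p with
      | nil => exact Set.mem_biUnion (by simp) (Set.mem_insert _ _)
      | cons hadj q =>
        refine Set.mem_biUnion ?_ (Set.mem_insert_of_mem _ hadj.symm)
        have := SimpleGraph.dist_le q
        simp only [SimpleGraph.Walk.length_cons] at hp
        rw [Finset.mem_coe, Set.Finite.mem_toFinset]
        change Gr.dist _ x ≤ n
        change Gr.dist y x ≤ n + 1 at hy
        omega
    have hfin' : (⋃ z ∈ hfin.toFinset, insert z (Gr.neighborSet z)).Finite :=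
      hfin.toFinset.finite_toSet.biUnion fun z _ => (hM z).1.insert z
    refine ⟨hfin'.subset hsub, ?_⟩
    calc {y | Gr.dist y x ≤ n + 1}.ncard
        ≤ (⋃ z ∈ hfin.toFinset, insert z (Gr.neighborSet z)).ncard := Set.ncard_le_ncard hsub hfin'
      _ ≤ ∑ z ∈ hfin.toFinset, (insert z (Gr.neighborSet z)).ncard :=
        Finset.set_ncard_biUnion_le _ _
      _ ≤ ∑ _z ∈ hfin.toFinset, (M + 1) :=
        Finset.sum_le_sum fun z _ => (Set.ncard_insert_le _ _).trans (by linarith [(hM z).2])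
      _ ≤ (M + 1) ^ (n + 1) := by
        rw [Finset.sum_const, smul_eq_mul, ← Set.ncard_eq_toFinset_card _ hfin, pow_succ]
        exact Nat.mul_le_mul_right _ hcard

def SimpleGraph.HasBoundedGeometry (Gr : SimpleGraph V) : Prop :=
  ∀ r : ℝ, ∃ N : ℕ, ∀ x : V,
    {y | grDist Gr y x ≤ r}.Finite ∧ {y | grDist Gr y x ≤ r}.ncard ≤ N

lemma SimpleGraph.Connected.hasBoundedGeometry (hconn : Gr.Connected) {M : ℕ}
    (hM : ∀ v : V, (Gr.neighborSet v).Finite ∧ (Gr.neighborSet v).ncard ≤ M) :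
    Gr.HasBoundedGeometry := by
  refine fun r => ⟨(M + 1) ^ ⌊r⌋₊, fun x => ?_⟩
  have hsub : {y | grDist Gr y x ≤ r} ⊆ {y | Gr.dist y x ≤ ⌊r⌋₊} := fun _ hy => Nat.le_floor hy
  obtain ⟨hfin, hcard⟩ := hconn.setOf_dist_le_finite_ncard_le hM x ⌊r⌋₊
  exact ⟨hfin.subset hsub, (Set.ncard_le_ncard hsub hfin).trans hcard⟩

def grThickening (Gr : SimpleGraph V) (r : ℝ) (S : Set V) : Set V :=
  {v | ∃ s ∈ S, grDist Gr v s ≤ r}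

lemma SimpleGraph.HasBoundedGeometry.finite_setOf_grDist_le (h : Gr.HasBoundedGeometry) (x : V)
    (r : ℝ) : {y | grDist Gr y x ≤ r}.Finite :=
  ((h r).choose_spec x).1

lemma SimpleGraph.HasBoundedGeometry.grThickening_finite (h : Gr.HasBoundedGeometry) (r : ℝ)
    {S : Set V} (hS : S.Finite) : (grThickening Gr r S).Finite := by
  have : grThickening Gr r S = ⋃ s ∈ S, {y | grDist Gr y s ≤ r} := by
    ext; simp [grThickening]
  rw [this]
  exact hS.biUnion fun s _ => h.finite_setOf_grDist_le s r

lemma grBoundary_subset_grThickening (c : ℝ) (A : Set V) :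
    grBoundary Gr c A ⊆ grThickening Gr c A := fun _ hx => hx.1

end GraphMetric

section GroupPowers

variable {G : Type*} [Group G] [TopologicalSpace G]

lemma IsCompact.pow [ContinuousMul G] {K : Set G} (hK : IsCompact K) : ∀ n : ℕ, IsCompact (K ^ n)
  | 0 => by simp
  | n + 1 => by rw [pow_succ]; exact (hK.pow n).mul hK

lemma IsCompact.exists_subset_pow [IsTopologicalGroup G] {K : Set G} (hK : K ∈ 𝓝 1)
    (hgen : ∀ g : G, ∃ n : ℕ, g ∈ K ^ n) {C : Set G} (hC : IsCompact C) :
    ∃ n : ℕ, C ⊆ K ^ n := by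
  have h1K : (1 : G) ∈ K := mem_of_mem_nhds hK
  have hmono : Monotone fun n : ℕ => K ^ n := fun _ _ => Set.pow_subset_pow_right h1K
  have hint : ∀ n : ℕ, K ^ n ⊆ interior (K ^ (n + 1)) := fun n g hg => by
    rw [pow_succ]
    exact subset_interior_mul_right ⟨g, hg, 1, mem_interior_iff_mem_nhds.2 hK, mul_one g⟩
  obtain ⟨n, hn⟩ := hC.elim_directed_cover (fun n => interior (K ^ (n + 1)))
    (fun _ => isOpen_interior)
    (fun g _ => let ⟨n, hn⟩ := hgen g; Set.mem_iUnion.2 ⟨n, hint n hn⟩)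
    (Monotone.directed_le fun _ _ h => interior_mono (hmono (Nat.succ_le_succ h)))
  exact ⟨n + 1, hn.trans interior_subset⟩

end GroupPowers

section Measure

open scoped Classical in
lemma MeasureTheory.sum_measure_le_mul_measure_of_card_le {α ι : Type*} [MeasurableSpace α]
    (μ : Measure α) (s : Finset ι) {T : ι → Set α} (hT : ∀ i ∈ s, MeasurableSet (T i))
    {D : Set α} (hTD : ∀ i ∈ s, T i ⊆ D) {N : ℕ}
    (hN : ∀ a : α, (s.filter fun i => a ∈ T i).card ≤ N) :
    ∑ i ∈ s, μ (T i) ≤ N * μ D := by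
  have hpt : ∀ a, ∑ i ∈ s, (T i).indicator 1 a ≤ D.indicator (fun _ => (N : ENNReal)) a := by
    intro a
    by_cases ha : a ∈ D
    · simpa [Set.indicator_apply, Finset.sum_boole, ha] using (hN a)
    · have : ∀ i ∈ s, a ∉ T i := fun i hi h => ha (hTD i hi h)
      simp [Set.indicator_of_notMem ha,
        Finset.sum_eq_zero fun i hi => Set.indicator_of_notMem (this i hi) _]
  calc ∑ i ∈ s, μ (T i) = ∫⁻ a, ∑ i ∈ s, (T i).indicator 1 a ∂μ := by
        rw [lintegral_finsetSum' _ fun i hi => (measurable_one.indicator (hT i hi)).aemeasurable]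
        exact Finset.sum_congr rfl fun i hi => (lintegral_indicator_one (hT i hi)).symm
    _ ≤ ∫⁻ a, D.indicator (fun _ => (N : ENNReal)) a ∂μ := lintegral_mono hpt
    _ ≤ N * μ D := lintegral_indicator_const_le _ _

variable {G V : Type*} [Group G] [MeasurableSpace G]

lemma MeasureTheory.measure_le_ncard_image_mul (μ : Measure G) [μ.IsMulLeftInvariant]
    {f : G → V} {S L : Set G} (hS : ∀ s t, f s = f t → s⁻¹ * t ∈ S) (hL : (f '' L).Finite) :
    μ L ≤ (f '' L).ncard * μ S := by
  have hfiber : ∀ v ∈ hL.toFinset, μ (f ⁻¹' {v}) ≤ μ S := fun v hv => by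
    obtain ⟨l, -, rfl⟩ := hL.mem_toFinset.1 hv
    calc μ (f ⁻¹' {f l}) ≤ μ (l • S) :=
          measure_mono fun s hs => ⟨l⁻¹ * s, hS l s hs.symm, by simp [smul_eq_mul]⟩
      _ = μ S := measure_smul μ l S
  calc μ L ≤ μ (⋃ v ∈ hL.toFinset, f ⁻¹' {v}) :=
        measure_mono fun s hs => Set.mem_biUnion (hL.mem_toFinset.2 ⟨s, hs, rfl⟩) rfl
    _ ≤ ∑ v ∈ hL.toFinset, μ (f ⁻¹' {v}) := measure_biUnion_finset_le _ _
    _ ≤ ∑ _v ∈ hL.toFinset, μ S := Finset.sum_le_sum hfiber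
    _ = (f '' L).ncard * μ S := by
        rw [Finset.sum_const, nsmul_eq_mul, Set.ncard_eq_toFinset_card _ hL]

end Measure

section OrbitMap

variable {G V : Type*} [Group G] {Gr : SimpleGraph V} {φ : G → V} {ψ : V → G} {K L : Set G}
  {r E E' c ρ : ℝ} {n : ℕ}

lemma smul_subset_mul_pow_diff_of_mem_grBoundary (hconn : Gr.Connected)
    (hψ : ∀ v, grDist Gr (φ (ψ v)) v ≤ r)
    (hE : ∀ l, ∀ u ∈ K, grDist Gr (φ (l * u)) (φ l) ≤ E)
    (hn : ∀ s t, grDist Gr (φ s) (φ t) ≤ ρ + c + r → s⁻¹ * t ∈ K ^ n)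
    (hρ : c + r + E ≤ ρ) {x : V} (hx : x ∈ grBoundary Gr c (grThickening Gr ρ (φ '' L))) :
    ψ x • K ⊆ (L * K ^ (n + 1)) \ L := by
  obtain ⟨⟨a, ⟨_, ⟨l, hl, rfl⟩, hal⟩, hxa⟩, ⟨b, hb, hxb⟩⟩ := hx
  have tri := hconn.grDist_triangle
  have hψx := hψ x
  rintro _ ⟨u, hu, rfl⟩
  refine ⟨?_, fun hL => hb ⟨_, ⟨_, hL, rfl⟩, ?_⟩⟩
  · have : l⁻¹ * ψ x ∈ K ^ n := hn l (ψ x) (by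
      linarith [tri (φ l) a x, tri (φ l) x (φ (ψ x)), grDist_comm (Gr := Gr) (φ l) a,
        grDist_comm (Gr := Gr) a x, grDist_comm (Gr := Gr) x (φ (ψ x))])
    rw [pow_succ, ← mul_assoc]
    exact Set.mul_mem_mul ⟨l, hl, _, this, mul_inv_cancel_left l (ψ x)⟩ hu
  · change grDist Gr b (φ (ψ x * u)) ≤ ρ
    linarith [tri b x (φ (ψ x * u)), tri x (φ (ψ x)) (φ (ψ x * u)), hE (ψ x) u hu,
      grDist_comm (Gr := Gr) b x, grDist_comm (Gr := Gr) x (φ (ψ x)),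
      grDist_comm (Gr := Gr) (φ (ψ x)) (φ (ψ x * u))]

lemma grDist_le_of_mem_smul (hconn : Gr.Connected) (hψ : ∀ v, grDist Gr (φ (ψ v)) v ≤ r)
    (hE' : ∀ l, ∀ u ∈ K⁻¹, grDist Gr (φ (l * u)) (φ l) ≤ E') {x : V} {g : G}
    (hg : g ∈ ψ x • K) : grDist Gr x (φ g) ≤ r + E' := by
  obtain ⟨u, hu, rfl⟩ := hg
  have := hE' (ψ x • u) u⁻¹ (Set.inv_mem_inv.2 hu)
  rw [smul_eq_mul, mul_inv_cancel_right] at this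
  change grDist Gr x (φ (ψ x * u)) ≤ r + E'
  linarith [hconn.grDist_triangle x (φ (ψ x)) (φ (ψ x * u)), hψ x,
    grDist_comm (Gr := Gr) x (φ (ψ x))]

variable [TopologicalSpace G] [IsTopologicalGroup G] [MeasurableSpace G] [BorelSpace G]

lemma ncard_grBoundary_mul_measure_le (μ : Measure G) [μ.IsMulLeftInvariant]
    (hconn : Gr.Connected) (hψ : ∀ v, grDist Gr (φ (ψ v)) v ≤ r)
    (hE : ∀ l, ∀ u ∈ K, grDist Gr (φ (l * u)) (φ l) ≤ E)
    (hE' : ∀ l, ∀ u ∈ K⁻¹, grDist Gr (φ (l * u)) (φ l) ≤ E')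
    (hn : ∀ s t, grDist Gr (φ s) (φ t) ≤ ρ + c + r → s⁻¹ * t ∈ K ^ n)
    (hρ : c + r + E ≤ ρ) {N : ℕ}
    (hN : ∀ v, {x | grDist Gr x v ≤ r + E'}.Finite ∧ {x | grDist Gr x v ≤ r + E'}.ncard ≤ N)
    (hfin : (grBoundary Gr c (grThickening Gr ρ (φ '' L))).Finite) :
    (grBoundary Gr c (grThickening Gr ρ (φ '' L))).ncard * μ (interior K) ≤
      N * μ ((L * K ^ (n + 1)) \ L) := by
  classical
  have hsum := sum_measure_le_mul_measure_of_card_le μ hfin.toFinset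
    (T := fun x => ψ x • interior K) (fun x _ => (isOpen_interior.smul _).measurableSet)
    (fun x hx => (Set.smul_set_mono interior_subset).trans
      (smul_subset_mul_pow_diff_of_mem_grBoundary hconn hψ hE hn hρ (hfin.mem_toFinset.1 hx)))
    (N := N) fun g => by
      calc _ = (↑(hfin.toFinset.filter fun x => g ∈ ψ x • interior K) : Set V).ncard :=
            (Set.ncard_coe_finset _).symm
        _ ≤ {x | grDist Gr x (φ g) ≤ r + E'}.ncard := Set.ncard_le_ncard
            (fun x hx => grDist_le_of_mem_smul hconn hψ hE'
              (Set.smul_set_mono interior_subset (Finset.mem_filter.1 hx).2)) (hN _).1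
        _ ≤ N := (hN _).2
  simpa [measure_smul, Set.ncard_eq_toFinset_card _ hfin] using hsum

end OrbitMap

def SimpleGraph.IsAmenable {V : Type*} (Gr : SimpleGraph V) : Prop :=
  ∀ c ε : ℝ, 0 < c → 0 < ε → ∃ A : Set V, A.Finite ∧ A.Nonempty ∧
    ((grBoundary Gr c A).ncard : ℝ) < ε * A.ncard

lemma SimpleGraph.isAmenable_of_ncard_grBoundary_le {V : Type*} {Gr : SimpleGraph V} {C : ℝ}
    (h : ∀ c δ : ℝ, 0 < δ → ∃ A : Set V, A.Finite ∧ A.Nonempty ∧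
      ((grBoundary Gr c A).ncard : ℝ) ≤ C * δ * A.ncard) :
    Gr.IsAmenable := by
  intro c ε _ hε
  obtain ⟨A, hAfin, hAne, hA⟩ := h c (ε / (|C| + 1)) (by positivity)
  have hApos : (0 : ℝ) < A.ncard := by exact_mod_cast (Set.ncard_pos hAfin).2 hAne
  have hCε : C * (ε / (|C| + 1)) < ε := by
    rw [mul_div_assoc', div_lt_iff₀ (by positivity)]
    nlinarith [le_abs_self C]
  exact ⟨A, hAfin, hAne, hA.trans_lt (mul_lt_mul_of_pos_right hCε hApos)⟩

theorem SimpleGraph.isAmenable_of_folner {G V : Type*} [Group G] [TopologicalSpace G]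
    [IsTopologicalGroup G] [MeasurableSpace G] [BorelSpace G]
    (μ : Measure G) [μ.IsHaarMeasure] {K : Set G} (hKcomp : IsCompact K) (hKnhds : K ∈ 𝓝 1)
    (hFolner : ∀ ε : ℝ, 0 < ε → ∀ m : ℕ, ∃ L : Set G,
      IsCompact L ∧ 0 < μ L ∧ μ ((L * K ^ m) \ L) < ENNReal.ofReal ε * μ L)
    {Gr : SimpleGraph V} (hconn : Gr.Connected) (hbg : Gr.HasBoundedGeometry) {φ : G → V}
    (hcoarse : ∀ S : Set G, IsCompact S → ∃ E, ∀ l, ∀ u ∈ S, grDist Gr (φ (l * u)) (φ l) ≤ E)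
    (hproper : ∀ R : ℝ, ∃ n : ℕ, ∀ s t, grDist Gr (φ s) (φ t) ≤ R → s⁻¹ * t ∈ K ^ n)
    (hcobdd : ∃ r, ∀ v, ∃ s, grDist Gr (φ s) v ≤ r) :
    Gr.IsAmenable := by
  obtain ⟨r, hr⟩ := hcobdd
  choose ψ hψ using hr
  obtain ⟨E, hE⟩ := hcoarse K hKcomp
  obtain ⟨E', hE'⟩ := hcoarse K⁻¹ hKcomp.inv
  obtain ⟨N, hN⟩ := hbg (r + E')
  obtain ⟨n₀, hn₀⟩ := hproper 0
  have hKpos : 0 < μ (interior K) :=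
    isOpen_interior.measure_pos μ ⟨1, mem_interior_iff_mem_nhds.2 hKnhds⟩
  have hKfin : μ (interior K) ≠ ⊤ :=
    ((measure_mono interior_subset).trans_lt hKcomp.measure_lt_top).ne
  refine isAmenable_of_ncard_grBoundary_le
    (C := N * (μ (K ^ n₀)).toReal / (μ (interior K)).toReal) fun c δ hδ => ?_
  set ρ := max (c + r + E) 0
  obtain ⟨n, hn⟩ := hproper (ρ + c + r)
  obtain ⟨L, hLcomp, hLpos, hLfol⟩ := hFolner δ hδ (n + 1)
  obtain ⟨E_L, hE_L⟩ := hcoarse L hLcomp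
  have hφL : (φ '' L).Finite := (hbg.finite_setOf_grDist_le (φ 1) E_L).subset <| by
    rintro _ ⟨l, hl, rfl⟩
    simpa using hE_L 1 l hl
  set A := grThickening Gr ρ (φ '' L)
  have hφLA : φ '' L ⊆ A := fun v hv => ⟨v, hv, by rw [grDist_self]; exact le_max_right _ _⟩
  have hAfin : A.Finite := hbg.grThickening_finite ρ hφL
  have hBfin : (grBoundary Gr c A).Finite :=
    (hbg.grThickening_finite c hAfin).subset (grBoundary_subset_grThickening c A)
  have hLA : μ L ≤ A.ncard * μ (K ^ n₀) :=
    (measure_le_ncard_image_mul μ (fun s t hst => hn₀ s t (by simp [hst, grDist_self])) hφL).trans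
      (by gcongr ?_ * _; exact_mod_cast Set.ncard_le_ncard hφLA hAfin)
  have hbound : (grBoundary Gr c A).ncard * μ (interior K) ≤
      N * (ENNReal.ofReal δ * (A.ncard * μ (K ^ n₀))) :=
    (ncard_grBoundary_mul_measure_le μ hconn hψ hE hE' hn (le_max_left _ _) hN hBfin).trans
      (by gcongr; exact hLfol.le.trans (by gcongr))
  refine ⟨A, hAfin, (nonempty_of_measure_ne_zero hLpos.ne').image φ |>.mono hφLA, ?_⟩
  have hKn₀ := (hKcomp.pow n₀).measure_lt_top (μ := μ)
  have hreal := ENNReal.toReal_mono (by finiteness) hbound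
  simp only [ENNReal.toReal_mul, ENNReal.toReal_natCast, ENNReal.toReal_ofReal hδ.le] at hreal
  rw [div_mul_eq_mul_div, div_mul_eq_mul_div, le_div_iff₀ (ENNReal.toReal_pos hKpos.ne' hKfin)]
  linarith
namespace IsRoughCayleyGraph

variable {G V : Type*} [Group G] [TopologicalSpace G] {Gr : SimpleGraph V} {act : G → V → V}
  {C₁ r₁ : ℝ}

lemma grDist_act_mul_le (h : IsRoughCayleyGraph Gr act C₁ r₁) (s t : G) (x y : V) :
    grDist Gr (act (s * t) x) (act s y) ≤ C₁ * grDist Gr (act t x) y + 2 * r₁ := by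
  obtain ⟨hconn, -, hqi, -, hmul, -⟩ := h
  linarith [hconn.grDist_triangle (act (s * t) x) (act s (act t x)) (act s y), hmul s t x,
    grDist_comm (Gr := Gr) (act (s * t) x) (act s (act t x)), ((hqi s).1 (act t x) y).2]

lemma grDist_act_inv_mul_le (h : IsRoughCayleyGraph Gr act C₁ r₁) (s t : G) (x : V) :
    grDist Gr (act (s⁻¹ * t) x) x ≤ C₁ * grDist Gr (act s x) (act t x) + 4 * r₁ := by
  have ⟨hconn, _, _, hone, hmul, _⟩ := h
  have := hmul s⁻¹ s x
  rw [inv_mul_cancel] at this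
  rw [grDist_comm (act s x)]
  linarith [hconn.grDist_triangle (act (s⁻¹ * t) x) (act s⁻¹ (act s x)) x,
    hconn.grDist_triangle (act s⁻¹ (act s x)) (act 1 x) x, hone x,
    h.grDist_act_mul_le s⁻¹ t x (act s x)]

lemma exists_grDist_act_mul_le (h : IsRoughCayleyGraph Gr act C₁ r₁) (hC₁ : 0 ≤ C₁) (x : V)
    {S : Set G} (hS : IsCompact S) :
    ∃ E, ∀ l, ∀ u ∈ S, grDist Gr (act (l * u) x) (act l x) ≤ E := by
  have ⟨_, _, _, _, _, hbdd, _⟩ := h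
  obtain ⟨R, hR⟩ := hbdd S hS x
  exact ⟨C₁ * R + 2 * r₁, fun l u hu =>
    (h.grDist_act_mul_le l u x x).trans (by gcongr; exact hR u hu)⟩

lemma exists_inv_mul_mem_pow [IsTopologicalGroup G] (h : IsRoughCayleyGraph Gr act C₁ r₁)
    (hC₁ : 0 ≤ C₁) {K : Set G} (hK : K ∈ 𝓝 1) (hgen : ∀ g : G, ∃ n : ℕ, g ∈ K ^ n) (x : V)
    (R : ℝ) : ∃ n : ℕ, ∀ s t, grDist Gr (act s x) (act t x) ≤ R → s⁻¹ * t ∈ K ^ n := by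
  have ⟨_, _, _, _, _, _, hproper, _⟩ := h
  obtain ⟨n, hn⟩ := (hproper (C₁ * R + 4 * r₁) x).exists_subset_pow hK hgen
  exact ⟨n, fun s t hst =>
    hn (subset_closure ((h.grDist_act_inv_mul_le s t x).trans (by gcongr)))⟩

end IsRoughCayleyGraph

theorem folner_implies_rough_cayley_graph_amenable_general
    {G V : Type*} [Group G] [TopologicalSpace G] [IsTopologicalGroup G]
    [MeasurableSpace G] [BorelSpace G]
    (μ : MeasureTheory.Measure G) [μ.IsHaarMeasure]
    (K : Set G) (hKcomp : IsCompact K) (hKnhds : K ∈ nhds (1 : G))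
    (hKgen : ∀ g : G, ∃ n : ℕ, g ∈ K ^ n)
    (Gr : SimpleGraph V) (act : G → V → V) (C₁ r₁ : ℝ) (hC₁ : 1 ≤ C₁)
    (hrcg : IsRoughCayleyGraph Gr act C₁ r₁)
    (hFolner : ∀ ε : ℝ, 0 < ε → ∀ m : ℕ, ∃ L : Set G,
      IsCompact L ∧ 0 < μ L ∧ μ ((L * K ^ m) \ L) < ENNReal.ofReal ε * μ L) :
    ∀ c ε : ℝ, 0 < c → 0 < ε → ∃ A : Set V, A.Finite ∧ A.Nonempty ∧
      ((grBoundary Gr c A).ncard : ℝ) < ε * (A.ncard : ℝ) := by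
  have ⟨hconn, ⟨M, hM⟩, _, _, _, _, _, hcob⟩ := hrcg
  obtain ⟨x₀⟩ := hconn.nonempty
  have hC₁₀ : 0 ≤ C₁ := zero_le_one.trans hC₁
  exact SimpleGraph.isAmenable_of_folner μ hKcomp hKnhds hFolner hconn
    (hconn.hasBoundedGeometry hM) (fun _ hS => hrcg.exists_grDist_act_mul_le hC₁₀ x₀ hS)
    (hrcg.exists_inv_mul_mem_pow hC₁₀ hKnhds hKgen x₀) ⟨r₁, hcob x₀⟩

/-- if a unimodular compactly generated group satisfies the Følner
condition, then its rough Cayley graph is amenable as a metric space. -/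
theorem folner_implies_rough_cayley_graph_amenable
    {G V : Type*} [Group G] [TopologicalSpace G] [IsTopologicalGroup G] [LocallyCompactSpace G]
    [MeasurableSpace G] [BorelSpace G]
    (μ : MeasureTheory.Measure G) [μ.IsHaarMeasure] [μ.IsMulRightInvariant]
    (K : Set G) (hKcomp : IsCompact K) (hKnhds : K ∈ nhds (1 : G)) (hKsymm : K⁻¹ = K)
    (hKgen : ∀ g : G, ∃ n : ℕ, g ∈ K ^ n)
    (Gr : SimpleGraph V) (act : G → V → V) (C₁ r₁ : ℝ) (hC₁ : 1 ≤ C₁) (hr₁ : 0 ≤ r₁)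
    (hrcg : IsRoughCayleyGraph Gr act C₁ r₁)
    (hFolner : ∀ ε : ℝ, 0 < ε → ∀ m : ℕ, ∃ L : Set G,
      IsCompact L ∧ 0 < μ L ∧ μ ((L * K ^ m) \ L) < ENNReal.ofReal ε * μ L) :
    ∀ c ε : ℝ, 0 < c → 0 < ε → ∃ A : Set V, A.Finite ∧ A.Nonempty ∧
      ((grBoundary Gr c A).ncard : ℝ) < ε * (A.ncard : ℝ) :=
  folner_implies_rough_cayley_graph_amenable_general μ K hKcomp hKnhds hKgen Gr act C₁ r₁ hC₁ hrcg
    hFolner
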